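/- arXiv:2210.17240 — 4 statements merged into one kernel-verified Lean document; each statement's English description precedes it below -/
import Mathlib

section
/- Let h : ℝ → ℝ be a C² solution of the equation h'' + (1/2)(1−a²) sin(2h)/(a²cos²h+sin²h) · h'² − (1−a²) tanh(x)/(a²+sinh²x) · h' − (k−2) tanh(x) h' + (d(d+k−2)/2)(a² sech²x + tanh²x)/(a²cos²h+sin²h) · sin(2h) = 0. Define W(x) = h'(x)² (a²cos²h(x)+sin²h(x))/(a² sech²x + tanh²x) + d(d+k−2) sin²h(x). Then W'(x) = 2(k−2) tanh(x) h'(x)² (a²cos²h(x)+sin²h(x))/(a² sech²x + tanh²x) for all x. -/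
open Real

/-! Write `P(h) = a²cos²h + sin²h` and `Q(x) = a²sech²x + tanh²x`. For any weights,
`W = h'²P(h)/Q + V(h)` has `W' = h'P/Q · (2h'' + (P'/P)h'² − (Q'/Q)h' + (Q/P)V'(h))`.
Here `P' = (1 − a²) sin 2h`, `V' = d(d+k−2) sin 2h`, and since `Q = (a² + sinh²x)/cosh²x`,
`Q'/Q = 2(1 − a²) tanh x/(a² + sinh²x)`; so the bracket is twice the left side of the ODE
plus `2(k − 2) tanh x · h'`, and only the friction term survives. -/

theorem hasDerivAt_weighted_energy {h v p q V : ℝ → ℝ} {x v' p' q' V' : ℝ}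
    (hh : HasDerivAt h (v x) x) (hv : HasDerivAt v v' x) (hp : HasDerivAt p p' (h x))
    (hq : HasDerivAt q q' x) (hV : HasDerivAt V V' (h x)) (hp0 : p (h x) ≠ 0) (hq0 : q x ≠ 0) :
    HasDerivAt (fun y => v y ^ 2 * p (h y) / q y + V (h y))
      (v x * p (h x) / q x * (2 * v' + p' / p (h x) * v x ^ 2
        - q' / q x * v x + q x / p (h x) * V')) x := by
  have H := (((hv.pow 2).mul (hp.comp x hh)).div hq hq0).add (hV.comp x hh)
  refine H.congr_deriv ?_
  simp only [Pi.pow_apply, Pi.mul_apply, Function.comp_apply]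
  field_simp
  ring

theorem hasDerivAt_sq_cos_add_sq_sin (a t : ℝ) :
    HasDerivAt (fun s => a ^ 2 * cos s ^ 2 + sin s ^ 2) ((1 - a ^ 2) * sin (2 * t)) t := by
  have H := (((hasDerivAt_cos t).pow 2).const_mul (a ^ 2)).add ((hasDerivAt_sin t).pow 2)
  refine H.congr_deriv ?_
  rw [sin_two_mul]
  push_cast
  ring

theorem sq_cos_add_sq_sin_pos {a : ℝ} (ha : a ≠ 0) (t : ℝ) :
    0 < a ^ 2 * cos t ^ 2 + sin t ^ 2 := by
  rcases eq_or_ne (cos t) 0 with hc | hc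
  · have := sin_sq_add_cos_sq t
    rw [hc] at this ⊢
    nlinarith
  · positivity

theorem sq_sech_add_sq_tanh_eq (a y : ℝ) :
    a ^ 2 * (1 / cosh y) ^ 2 + tanh y ^ 2 = (a ^ 2 + sinh y ^ 2) / cosh y ^ 2 := by
  rw [tanh_eq_sinh_div_cosh]
  ring

theorem sq_sech_add_sq_tanh_pos {a : ℝ} (ha : a ≠ 0) (y : ℝ) :
    0 < a ^ 2 * (1 / cosh y) ^ 2 + tanh y ^ 2 := by
  rw [sq_sech_add_sq_tanh_eq]
  have := cosh_pos y
  positivity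

theorem hasDerivAt_sq_sech_add_sq_tanh {a : ℝ} (ha : a ≠ 0) (y : ℝ) :
    HasDerivAt (fun z => a ^ 2 * (1 / cosh z) ^ 2 + tanh z ^ 2)
      ((a ^ 2 * (1 / cosh y) ^ 2 + tanh y ^ 2)
        * (2 * (1 - a ^ 2) * tanh y / (a ^ 2 + sinh y ^ 2))) y := by
  rw [funext (sq_sech_add_sq_tanh_eq a), sq_sech_add_sq_tanh_eq, tanh_eq_sinh_div_cosh]
  have hc := (cosh_pos y).ne'
  have hs : a ^ 2 + sinh y ^ 2 ≠ 0 := by positivity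
  have H := (((hasDerivAt_sinh y).pow 2).const_add (a ^ 2)).div
    ((hasDerivAt_cosh y).pow 2) (pow_ne_zero 2 hc)
  refine H.congr_deriv ?_
  simp only [Pi.pow_apply]
  field_simp
  linear_combination 2 * sinh y * cosh y * cosh_sq_sub_sinh_sq y

theorem stmt2_general (k d : ℕ) (a : ℝ) (ha : a ≠ 0)
    (h : ℝ → ℝ) (hreg : ContDiff ℝ 2 h)
    (hODE : ∀ x : ℝ, deriv (deriv h) x
        + (1 / 2) * (1 - a ^ 2) * Real.sin (2 * h x)
            / (a ^ 2 * Real.cos (h x) ^ 2 + Real.sin (h x) ^ 2) * (deriv h x) ^ 2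
        - (1 - a ^ 2) * Real.tanh x / (a ^ 2 + Real.sinh x ^ 2) * deriv h x
        - ((k : ℝ) - 2) * Real.tanh x * deriv h x
        + ((d : ℝ) * ((d : ℝ) + (k : ℝ) - 2) / 2)
            * (a ^ 2 * (1 / Real.cosh x) ^ 2 + Real.tanh x ^ 2)
            / (a ^ 2 * Real.cos (h x) ^ 2 + Real.sin (h x) ^ 2) * Real.sin (2 * h x) = 0) :
    ∀ x : ℝ,
      deriv (fun y => (deriv h y) ^ 2 * (a ^ 2 * Real.cos (h y) ^ 2 + Real.sin (h y) ^ 2)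
          / (a ^ 2 * (1 / Real.cosh y) ^ 2 + Real.tanh y ^ 2)
          + (d : ℝ) * ((d : ℝ) + (k : ℝ) - 2) * Real.sin (h y) ^ 2) x
        = 2 * ((k : ℝ) - 2) * Real.tanh x * (deriv h x) ^ 2
            * (a ^ 2 * Real.cos (h x) ^ 2 + Real.sin (h x) ^ 2)
            / (a ^ 2 * (1 / Real.cosh x) ^ 2 + Real.tanh x ^ 2) := by
  intro x
  have hP := sq_cos_add_sq_sin_pos ha (h x)
  have hQ := sq_sech_add_sq_tanh_pos ha x
  have hV : HasDerivAt (fun s => (d : ℝ) * ((d : ℝ) + (k : ℝ) - 2) * sin s ^ 2)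
      ((d : ℝ) * ((d : ℝ) + (k : ℝ) - 2) * sin (2 * h x)) (h x) := by
    refine (((hasDerivAt_sin (h x)).pow 2).const_mul _).congr_deriv ?_
    rw [sin_two_mul]
    push_cast
    ring
  have hW := hasDerivAt_weighted_energy
    ((hreg.differentiable two_ne_zero) x).hasDerivAt
    (hreg.differentiable_deriv_two x).hasDerivAt
    (hasDerivAt_sq_cos_add_sq_sin a (h x)) (hasDerivAt_sq_sech_add_sq_tanh ha x) hV hP.ne' hQ.ne'
  rw [hW.deriv, mul_div_cancel_left₀ _ hQ.ne']
  linear_combination (2 * deriv h x * (a ^ 2 * cos (h x) ^ 2 + sin (h x) ^ 2)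
    / (a ^ 2 * (1 / cosh x) ^ 2 + tanh x ^ 2)) * hODE x

/-- If h is a C² solution of the ellipsoid Euler–Lagrange ODE, then the Lyapunov
function W(x) = h'²(a²cos²h+sin²h)/(a²sech²x+tanh²x) + d(d+k−2)sin²h satisfies
W'(x) = 2(k−2)tanh(x) h'²(a²cos²h+sin²h)/(a²sech²x+tanh²x). -/
theorem stmt2 (k d : ℕ) (hk : 3 ≤ k) (hd : 1 ≤ d) (a : ℝ) (ha : a ≠ 0)
    (h : ℝ → ℝ) (hreg : ContDiff ℝ 2 h)
    (hODE : ∀ x : ℝ, deriv (deriv h) x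
        + (1 / 2) * (1 - a ^ 2) * Real.sin (2 * h x)
            / (a ^ 2 * Real.cos (h x) ^ 2 + Real.sin (h x) ^ 2) * (deriv h x) ^ 2
        - (1 - a ^ 2) * Real.tanh x / (a ^ 2 + Real.sinh x ^ 2) * deriv h x
        - ((k : ℝ) - 2) * Real.tanh x * deriv h x
        + ((d : ℝ) * ((d : ℝ) + (k : ℝ) - 2) / 2)
            * (a ^ 2 * (1 / Real.cosh x) ^ 2 + Real.tanh x ^ 2)
            / (a ^ 2 * Real.cos (h x) ^ 2 + Real.sin (h x) ^ 2) * Real.sin (2 * h x) = 0) :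
    ∀ x : ℝ,
      deriv (fun y => (deriv h y) ^ 2 * (a ^ 2 * Real.cos (h y) ^ 2 + Real.sin (h y) ^ 2)
          / (a ^ 2 * (1 / Real.cosh y) ^ 2 + Real.tanh y ^ 2)
          + (d : ℝ) * ((d : ℝ) + (k : ℝ) - 2) * Real.sin (h y) ^ 2) x
        = 2 * ((k : ℝ) - 2) * Real.tanh x * (deriv h x) ^ 2
            * (a ^ 2 * Real.cos (h x) ^ 2 + Real.sin (h x) ^ 2)
            / (a ^ 2 * (1 / Real.cosh x) ^ 2 + Real.tanh x ^ 2) :=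
  stmt2_general k d a ha h hreg hODE
end

section
/- For k ≥ 3, d ≥ 1 and a > 0, the inequality −(1/2)(1 + d(d+k−2)a⁻²) + (1/(2a²))·√((k−2)²a⁴ + (a² − d(d+k−2))²) < 0 holds if and only if a² < 4d(d+k−2)/(k−2)². -/
/-- For k ≥ 3, d ≥ 1 and a > 0:
−(1/2)(1 + d(d+k−2)a⁻²) + (1/(2a²))√((k−2)²a⁴ + (a² − d(d+k−2))²) < 0
iff a² < 4d(d+k−2)/(k−2)². -/
theorem stmt9 (k d : ℕ) (hk : 3 ≤ k) (hd : 1 ≤ d) (a : ℝ) (ha : 0 < a) :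
    (-(1 / 2) * (1 + (d : ℝ) * ((d : ℝ) + (k : ℝ) - 2) / a ^ 2)
        + 1 / (2 * a ^ 2) * Real.sqrt (((k : ℝ) - 2) ^ 2 * a ^ 4
          + (a ^ 2 - (d : ℝ) * ((d : ℝ) + (k : ℝ) - 2)) ^ 2) < 0) ↔
      a ^ 2 < 4 * (d : ℝ) * ((d : ℝ) + (k : ℝ) - 2) / ((k : ℝ) - 2) ^ 2 := by
  have hk' : (3 : ℝ) ≤ (k : ℝ) := by exact_mod_cast hk
  have hd' : (1 : ℝ) ≤ (d : ℝ) := by exact_mod_cast hd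
  have hc : (0 : ℝ) < (k : ℝ) - 2 := by linarith
  have hm : (0 : ℝ) < (d : ℝ) * ((d : ℝ) + (k : ℝ) - 2) := by nlinarith
  have ha2 : (0 : ℝ) < a ^ 2 := by positivity
  set m : ℝ := (d : ℝ) * ((d : ℝ) + (k : ℝ) - 2) with hmdef
  set E : ℝ := ((k : ℝ) - 2) ^ 2 * a ^ 4 + (a ^ 2 - m) ^ 2 with hEdef
  have key : -(1 / 2) * (1 + m / a ^ 2) + 1 / (2 * a ^ 2) * Real.sqrt E
      = (Real.sqrt E - (a ^ 2 + m)) / (2 * a ^ 2) := by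
    field_simp
    ring
  rw [key, div_neg_iff]
  have hpos : Real.sqrt E < a ^ 2 + m ↔ E < (a ^ 2 + m) ^ 2 :=
    Real.sqrt_lt' (by linarith)
  constructor
  · rintro (⟨h1, h2⟩ | ⟨h1, h2⟩)
    · linarith
    · have hE := hpos.mp (by linarith)
      rw [lt_div_iff₀ (by positivity)]
      nlinarith
  · intro h
    right
    rw [lt_div_iff₀ (by positivity)] at h
    refine ⟨by linarith [hpos.mpr (by nlinarith)], by linarith⟩
end

section
/- The function h₁(x) = −π/2 + 2 arctan(eˣ) is a solution of the ODE h'' + (1/2)(1−a²) sin(2h)/(a²cos²h+sin²h)·h'² − (1−a²) tanh(x)/(a²+sinh²x)·h' − (k−2) tanh(x)·h' + ((k−1)/2)·(a² sech²x + tanh²x)/(a²cos²h+sin²h)·sin(2h) = 0 for every k ∈ ℕ and every a ≠ 0. -/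
/-!
With t = eˣ, the double-angle formulas for 2 arctan t give sin h₁ = tanh x and
cos h₁ = h₁' = sech x, so h₁'' = -tanh x sech x and
a² cos² h₁ + sin² h₁ = (a² + sinh² x) / cosh² x.
Substituting, the two terms carrying the factor 1 - a² cancel, the last term becomes
(k - 1) tanh x sech² x, and what is left sums to zero.
-/

open Real

theorem Real.sin_two_mul_arctan (t : ℝ) : sin (2 * arctan t) = 2 * t / (1 + t ^ 2) := by
  have hsq : √(1 + t ^ 2) ^ 2 = 1 + t ^ 2 := sq_sqrt (by positivity)
  rw [sin_two_mul, sin_arctan, cos_arctan]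
  field_simp
  rw [hsq]

theorem Real.cos_two_mul_arctan (t : ℝ) : cos (2 * arctan t) = (1 - t ^ 2) / (1 + t ^ 2) := by
  rw [cos_two_mul, cos_sq_arctan]
  field_simp
  ring

theorem Real.inv_cosh_eq_exp (x : ℝ) : (cosh x)⁻¹ = 2 * exp x / (1 + exp x ^ 2) := by
  rw [cosh_eq, exp_neg]
  field_simp
  ring

theorem Real.tanh_eq_exp_sq (x : ℝ) : tanh x = (exp x ^ 2 - 1) / (1 + exp x ^ 2) := by
  rw [tanh_eq, exp_neg]
  field_simp
  ring

theorem sin_neg_pi_div_two_add_two_mul_arctan_exp (x : ℝ) :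
    sin (-(π / 2) + 2 * arctan (exp x)) = tanh x := by
  rw [neg_add_eq_sub, sin_sub_pi_div_two, cos_two_mul_arctan, tanh_eq_exp_sq]
  ring

theorem cos_neg_pi_div_two_add_two_mul_arctan_exp (x : ℝ) :
    cos (-(π / 2) + 2 * arctan (exp x)) = (cosh x)⁻¹ := by
  rw [neg_add_eq_sub, cos_sub_pi_div_two, sin_two_mul_arctan, inv_cosh_eq_exp]

theorem hasDerivAt_neg_pi_div_two_add_two_mul_arctan_exp (x : ℝ) :
    HasDerivAt (fun y => -(π / 2) + 2 * arctan (exp y)) (cosh x)⁻¹ x := by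
  have h := (((hasDerivAt_arctan (exp x)).comp x (hasDerivAt_exp x)).const_mul 2).const_add
    (-(π / 2))
  refine h.congr_deriv ?_
  rw [inv_cosh_eq_exp]
  field_simp

theorem Real.hasDerivAt_inv_cosh (x : ℝ) :
    HasDerivAt (fun y => (cosh y)⁻¹) (-(tanh x * (cosh x)⁻¹)) x := by
  refine ((hasDerivAt_cosh x).inv (cosh_pos x).ne').congr_deriv ?_
  rw [tanh_eq_sinh_div_cosh]
  ring

theorem Real.sq_mul_inv_cosh_sq_add_tanh_sq (a x : ℝ) :
    a ^ 2 * (cosh x)⁻¹ ^ 2 + tanh x ^ 2 = (a ^ 2 + sinh x ^ 2) / cosh x ^ 2 := by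
  rw [tanh_eq_sinh_div_cosh]
  field_simp [(cosh_pos x).ne']

theorem stmt11_general (k : ℕ) (a : ℝ) :
    ∀ x : ℝ,
      deriv (deriv (fun y : ℝ => -(Real.pi / 2) + 2 * Real.arctan (Real.exp y))) x
      + (1 / 2) * (1 - a ^ 2)
          * Real.sin (2 * (-(Real.pi / 2) + 2 * Real.arctan (Real.exp x)))
          / (a ^ 2 * Real.cos (-(Real.pi / 2) + 2 * Real.arctan (Real.exp x)) ^ 2
            + Real.sin (-(Real.pi / 2) + 2 * Real.arctan (Real.exp x)) ^ 2)
          * (deriv (fun y : ℝ => -(Real.pi / 2) + 2 * Real.arctan (Real.exp y)) x) ^ 2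
      - (1 - a ^ 2) * Real.tanh x / (a ^ 2 + Real.sinh x ^ 2)
          * deriv (fun y : ℝ => -(Real.pi / 2) + 2 * Real.arctan (Real.exp y)) x
      - ((k : ℝ) - 2) * Real.tanh x
          * deriv (fun y : ℝ => -(Real.pi / 2) + 2 * Real.arctan (Real.exp y)) x
      + (((k : ℝ) - 1) / 2) * (a ^ 2 * (1 / Real.cosh x) ^ 2 + Real.tanh x ^ 2)
          / (a ^ 2 * Real.cos (-(Real.pi / 2) + 2 * Real.arctan (Real.exp x)) ^ 2
            + Real.sin (-(Real.pi / 2) + 2 * Real.arctan (Real.exp x)) ^ 2)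
          * Real.sin (2 * (-(Real.pi / 2) + 2 * Real.arctan (Real.exp x))) = 0 := by
  intro x
  have hderiv : deriv (fun y => -(π / 2) + 2 * arctan (exp y)) = fun y => (cosh y)⁻¹ :=
    funext fun y => (hasDerivAt_neg_pi_div_two_add_two_mul_arctan_exp y).deriv
  rw [hderiv, (hasDerivAt_inv_cosh x).deriv, sin_two_mul, one_div,
    sin_neg_pi_div_two_add_two_mul_arctan_exp, cos_neg_pi_div_two_add_two_mul_arctan_exp,
    sq_mul_inv_cosh_sq_add_tanh_sq]
  -- the denominator a² + sinh² x vanishes only when every term has the factor tanh x = 0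
  rcases eq_or_ne (sinh x) 0 with hsinh | hsinh
  · simp [tanh_eq_sinh_div_cosh, hsinh]
  · have hc := (cosh_pos x).ne'
    have hD : a ^ 2 + sinh x ^ 2 ≠ 0 := by positivity
    rw [tanh_eq_sinh_div_cosh]
    field_simp
    ring

/-- h₁(x) = −π/2 + 2 arctan(eˣ) solves the ellipsoid Euler–Lagrange equation with
d = 1 (so d(d+k−2) = k−1) for every k ∈ ℕ and every a ≠ 0. -/
theorem stmt11 (k : ℕ) (a : ℝ) (ha : a ≠ 0) :
    ∀ x : ℝ,
      deriv (deriv (fun y : ℝ => -(Real.pi / 2) + 2 * Real.arctan (Real.exp y))) x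
      + (1 / 2) * (1 - a ^ 2)
          * Real.sin (2 * (-(Real.pi / 2) + 2 * Real.arctan (Real.exp x)))
          / (a ^ 2 * Real.cos (-(Real.pi / 2) + 2 * Real.arctan (Real.exp x)) ^ 2
            + Real.sin (-(Real.pi / 2) + 2 * Real.arctan (Real.exp x)) ^ 2)
          * (deriv (fun y : ℝ => -(Real.pi / 2) + 2 * Real.arctan (Real.exp y)) x) ^ 2
      - (1 - a ^ 2) * Real.tanh x / (a ^ 2 + Real.sinh x ^ 2)
          * deriv (fun y : ℝ => -(Real.pi / 2) + 2 * Real.arctan (Real.exp y)) x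
      - ((k : ℝ) - 2) * Real.tanh x
          * deriv (fun y : ℝ => -(Real.pi / 2) + 2 * Real.arctan (Real.exp y)) x
      + (((k : ℝ) - 1) / 2) * (a ^ 2 * (1 / Real.cosh x) ^ 2 + Real.tanh x ^ 2)
          / (a ^ 2 * Real.cos (-(Real.pi / 2) + 2 * Real.arctan (Real.exp x)) ^ 2
            + Real.sin (-(Real.pi / 2) + 2 * Real.arctan (Real.exp x)) ^ 2)
          * Real.sin (2 * (-(Real.pi / 2) + 2 * Real.arctan (Real.exp x))) = 0 :=
  stmt11_general k a
end

section
/- For k ∈ ℕ, k ≥ 3, and a ≠ 0, the function ξ(x) = (a² + sinh²x)^{−1/2} with λ = a²(2−k) satisfies the Jacobi equation ξ'' − (k−2) tanh(x) ξ' + (1−a²)·tanh(x)/(a²+sinh²x)·ξ' + (1−a²)(a²−sinh²x)/(a²+sinh²x)²·ξ + (k−1)(a²−sinh²x)/(a²+sinh²x)·ξ + λ·ξ/(cosh²x·(a² sech²x + tanh²x)) = 0 on all of ℝ. -/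
/-!
With ξ = (a² + sinh²)^(-1/2) one has ξ' = -sinh·cosh·ξ³ and
ξ'' = 3 sinh² cosh² ξ⁵ - (cosh² + sinh²) ξ³, while the coefficient of λ reduces to
1 / (a² + sinh²) = ξ². After substituting, the terms carrying k cancel, and using
cosh² = 1 + sinh² the rest is (1 + 3 sinh² - a²) ξ³ (ξ² (a² + sinh²) - 1) = 0.
-/

open Real

theorem HasDerivAt.one_div_sqrt {f : ℝ → ℝ} {f' x : ℝ} (hf : HasDerivAt f f' x) (hx : 0 < f x) :
    HasDerivAt (fun y => 1 / √(f y)) (-(f' / 2) * (1 / √(f x)) ^ 3) x := by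
  have hs : √(f x) ≠ 0 := by positivity
  refine ((hasDerivAt_const x 1).fun_div (hf.sqrt hx.ne') hs).congr_deriv ?_
  field_simp
  ring

section

variable {a : ℝ}

theorem sq_add_sinh_sq_pos (ha : a ≠ 0) (y : ℝ) : 0 < a ^ 2 + sinh y ^ 2 := by positivity

theorem hasDerivAt_one_div_sqrt_sq_add_sinh_sq (ha : a ≠ 0) (y : ℝ) :
    HasDerivAt (fun y => 1 / √(a ^ 2 + sinh y ^ 2))
      (-(sinh y * cosh y) * (1 / √(a ^ 2 + sinh y ^ 2)) ^ 3) y := by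
  refine ((((hasDerivAt_sinh y).fun_pow 2).const_add (a ^ 2)).one_div_sqrt
    (sq_add_sinh_sq_pos ha y)).congr_deriv ?_
  push_cast
  ring

theorem deriv_one_div_sqrt_sq_add_sinh_sq (ha : a ≠ 0) :
    deriv (fun y => 1 / √(a ^ 2 + sinh y ^ 2))
      = fun y => -(sinh y * cosh y) * (1 / √(a ^ 2 + sinh y ^ 2)) ^ 3 :=
  funext fun y => (hasDerivAt_one_div_sqrt_sq_add_sinh_sq ha y).deriv

theorem deriv_deriv_one_div_sqrt_sq_add_sinh_sq (ha : a ≠ 0) (y : ℝ) :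
    deriv (deriv (fun y => 1 / √(a ^ 2 + sinh y ^ 2))) y
      = 3 * sinh y ^ 2 * cosh y ^ 2 * (1 / √(a ^ 2 + sinh y ^ 2)) ^ 5
        - (cosh y ^ 2 + sinh y ^ 2) * (1 / √(a ^ 2 + sinh y ^ 2)) ^ 3 := by
  rw [deriv_one_div_sqrt_sq_add_sinh_sq ha]
  refine (((((hasDerivAt_sinh y).fun_mul (hasDerivAt_cosh y)).fun_neg).fun_mul
    ((hasDerivAt_one_div_sqrt_sq_add_sinh_sq ha y).fun_pow 3)).congr_deriv ?_).deriv
  push_cast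
  ring

theorem cosh_sq_mul_sq_mul_sech_sq_add_tanh_sq (a x : ℝ) :
    cosh x ^ 2 * (a ^ 2 * (1 / cosh x) ^ 2 + tanh x ^ 2) = a ^ 2 + sinh x ^ 2 := by
  have := (cosh_pos x).ne'
  rw [tanh_eq_sinh_div_cosh]
  field_simp

end

theorem jacobi_identity_of_sq_mul_eq_one (k a s c ξ : ℝ) (hc : c ≠ 0)
    (hcs : c ^ 2 = 1 + s ^ 2) (hξ : ξ ^ 2 * (a ^ 2 + s ^ 2) = 1) :
    3 * s ^ 2 * c ^ 2 * ξ ^ 5 - (c ^ 2 + s ^ 2) * ξ ^ 3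
      - (k - 2) * (s / c) * (-(s * c) * ξ ^ 3)
      + (1 - a ^ 2) * (s / c) / (a ^ 2 + s ^ 2) * (-(s * c) * ξ ^ 3)
      + (1 - a ^ 2) * (a ^ 2 - s ^ 2) / (a ^ 2 + s ^ 2) ^ 2 * ξ
      + (k - 1) * (a ^ 2 - s ^ 2) / (a ^ 2 + s ^ 2) * ξ
      + a ^ 2 * (2 - k) * ξ / (a ^ 2 + s ^ 2) = 0 := by
  have hu : (a ^ 2 + s ^ 2)⁻¹ = ξ ^ 2 := (eq_inv_of_mul_eq_one_left hξ).symm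
  have hcc : c⁻¹ * c = 1 := inv_mul_cancel₀ hc
  simp only [div_eq_mul_inv, ← inv_pow, hu]
  linear_combination ((k - 2) * s ^ 2 * ξ ^ 3 - (1 - a ^ 2) * s ^ 2 * ξ ^ 5) * hcc
    + (3 * s ^ 2 * ξ ^ 5 - ξ ^ 3) * hcs + (1 + 3 * s ^ 2 - a ^ 2) * ξ ^ 3 * hξ

theorem stmt13_general (k : ℕ) (a : ℝ) (ha : a ≠ 0) :
    ∀ x : ℝ,
      deriv (deriv (fun y : ℝ => 1 / Real.sqrt (a ^ 2 + Real.sinh y ^ 2))) x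
      - ((k : ℝ) - 2) * Real.tanh x
          * deriv (fun y : ℝ => 1 / Real.sqrt (a ^ 2 + Real.sinh y ^ 2)) x
      + (1 - a ^ 2) * Real.tanh x / (a ^ 2 + Real.sinh x ^ 2)
          * deriv (fun y : ℝ => 1 / Real.sqrt (a ^ 2 + Real.sinh y ^ 2)) x
      + (1 - a ^ 2) * (a ^ 2 - Real.sinh x ^ 2) / (a ^ 2 + Real.sinh x ^ 2) ^ 2
          * (1 / Real.sqrt (a ^ 2 + Real.sinh x ^ 2))
      + ((k : ℝ) - 1) * (a ^ 2 - Real.sinh x ^ 2) / (a ^ 2 + Real.sinh x ^ 2)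
          * (1 / Real.sqrt (a ^ 2 + Real.sinh x ^ 2))
      + (a ^ 2 * (2 - (k : ℝ))) * (1 / Real.sqrt (a ^ 2 + Real.sinh x ^ 2))
          / (Real.cosh x ^ 2 * (a ^ 2 * (1 / Real.cosh x) ^ 2 + Real.tanh x ^ 2)) = 0 := by
  intro x
  have hu := sq_add_sinh_sq_pos ha x
  rw [deriv_deriv_one_div_sqrt_sq_add_sinh_sq ha, deriv_one_div_sqrt_sq_add_sinh_sq ha,
    cosh_sq_mul_sq_mul_sech_sq_add_tanh_sq, tanh_eq_sinh_div_cosh]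
  refine jacobi_identity_of_sq_mul_eq_one k a _ _ _ (cosh_pos x).ne' (cosh_sq' x) ?_
  rw [div_pow, one_pow, sq_sqrt hu.le]
  exact div_mul_cancel₀ 1 hu.ne'

/-- ξ(x) = 1/√(a²+sinh²x) with λ = a²(2−k) solves the Jacobi equation at the
identity self-map of the ellipsoid E_a, for k ≥ 3 and a ≠ 0. -/
theorem stmt13 (k : ℕ) (hk : 3 ≤ k) (a : ℝ) (ha : a ≠ 0) :
    ∀ x : ℝ,
      deriv (deriv (fun y : ℝ => 1 / Real.sqrt (a ^ 2 + Real.sinh y ^ 2))) x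
      - ((k : ℝ) - 2) * Real.tanh x
          * deriv (fun y : ℝ => 1 / Real.sqrt (a ^ 2 + Real.sinh y ^ 2)) x
      + (1 - a ^ 2) * Real.tanh x / (a ^ 2 + Real.sinh x ^ 2)
          * deriv (fun y : ℝ => 1 / Real.sqrt (a ^ 2 + Real.sinh y ^ 2)) x
      + (1 - a ^ 2) * (a ^ 2 - Real.sinh x ^ 2) / (a ^ 2 + Real.sinh x ^ 2) ^ 2
          * (1 / Real.sqrt (a ^ 2 + Real.sinh x ^ 2))
      + ((k : ℝ) - 1) * (a ^ 2 - Real.sinh x ^ 2) / (a ^ 2 + Real.sinh x ^ 2)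
          * (1 / Real.sqrt (a ^ 2 + Real.sinh x ^ 2))
      + (a ^ 2 * (2 - (k : ℝ))) * (1 / Real.sqrt (a ^ 2 + Real.sinh x ^ 2))
          / (Real.cosh x ^ 2 * (a ^ 2 * (1 / Real.cosh x) ^ 2 + Real.tanh x ^ 2)) = 0 :=
  stmt13_general k a ha
end
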